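/- arXiv:math/0701656 — 3 statements merged into one kernel-verified Lean document; each statement's English description precedes it below -/
import Mathlib

section
/- For 0 < c < 1, the sum over i from 2 to n of ((n)_i / i)·2^{i-1}·(c/(2n))^i converges as n → ∞ to λ = -(1/2)(ln(1-c) + c). -/
open Filter

private lemma term_eq (c : ℝ) {n i : ℕ} (h2 : 2 ≤ i) (hn : 0 < n) :
    ((n.descFactorial i : ℝ) / i) * 2 ^ (i - 1) * (c / (2 * n)) ^ i
      = ((n.descFactorial i : ℝ) / (n : ℝ) ^ i) * (c ^ i / (2 * i)) := by
  have hi : (i : ℝ) ≠ 0 := Nat.cast_ne_zero.mpr (by omega)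
  have hn' : (n : ℝ) ≠ 0 := Nat.cast_ne_zero.mpr hn.ne'
  have h2i : (2 : ℝ) ^ (i - 1) * 2 = 2 ^ i := by
    rw [← pow_succ]; congr 1; omega
  have h2e : (2 : ℝ) ^ (i - 1) = 2 ^ i / 2 := by
    field_simp [← h2i]
    exact h2i
  rw [h2e, div_pow, mul_pow]
  have h2pow : (2 : ℝ) ^ i ≠ 0 := by positivity
  field_simp

private lemma desc_div_le {n i : ℕ} : ((n.descFactorial i : ℝ) / (n : ℝ) ^ i) ≤ 1 := by
  rcases Nat.eq_zero_or_pos n with rfl | hn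
  · rcases Nat.eq_zero_or_pos i with rfl | hi
    · simp
    · simp [Nat.descFactorial_of_lt hi, zero_pow hi.ne']
  · have hpos : (0:ℝ) < (n:ℝ) ^ i := by positivity
    rw [div_le_one hpos]
    exact_mod_cast Nat.descFactorial_le_pow n i

private lemma desc_div_tendsto (i : ℕ) :
    Tendsto (fun n : ℕ => (n.descFactorial i : ℝ) / (n : ℝ) ^ i) atTop (nhds 1) := by
  have key : ∀ᶠ n : ℕ in atTop, (n.descFactorial i : ℝ) / (n : ℝ) ^ i
      = ∏ j ∈ Finset.range i, (1 - (j : ℝ) / n) := by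
    filter_upwards [eventually_ge_atTop i, eventually_ge_atTop 1] with n hni hn1
    have hn0 : (n : ℝ) ≠ 0 := Nat.cast_ne_zero.mpr (by omega)
    have h1 : ∏ j ∈ Finset.range i, (1 - (j:ℝ)/n)
        = ∏ j ∈ Finset.range i, (((n:ℝ) - j)/n) :=
      Finset.prod_congr rfl fun j _ => by field_simp
    rw [Nat.descFactorial_eq_prod_range, h1, Finset.prod_div_distrib,
      Finset.prod_const, Finset.card_range]
    push_cast
    congr 1
    exact Finset.prod_congr rfl fun j hj =>
      Nat.cast_sub (le_trans (le_of_lt (Finset.mem_range.mp hj)) hni)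
  have lim : Tendsto (fun n : ℕ => ∏ j ∈ Finset.range i, (1 - (j : ℝ) / n))
      atTop (nhds 1) := by
    have := tendsto_finset_prod (Finset.range i)
      (f := fun (j : ℕ) (n : ℕ) => 1 - (j : ℝ) / n) (x := atTop) (a := fun _ => 1)
      (fun j _ => by
        simpa using tendsto_const_nhds.sub (tendsto_const_div_atTop_nhds_zero_nat (j:ℝ)))
    simpa using this
  exact lim.congr' (key.mono fun n h => h.symm)

/-- For `0 < c < 1`, the expected total number of simple cycle pairs
`λ_n = ∑_{i=2}^n ((n)_i / i)·2^{i-1}·(c/(2n))^i` converges to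
`λ = -(1/2)(ln(1-c) + c)` as `n → ∞`. -/
theorem expected_total_cycles_limit (c : ℝ) (hc0 : 0 < c) (hc1 : c < 1) :
    Tendsto (fun n : ℕ => ∑ i ∈ Finset.Icc 2 n,
        ((n.descFactorial i : ℝ) / i) * 2 ^ (i - 1) * (c / (2 * n)) ^ i)
      atTop (nhds (-(1 / 2) * (Real.log (1 - c) + c))) := by
  have hc0' : (0:ℝ) ≤ c := hc0.le
  set F : ℕ → ℕ → ℝ := fun n i =>
    if 2 ≤ i ∧ i ≤ n then ((n.descFactorial i : ℝ) / i) * 2 ^ (i - 1) * (c / (2 * n)) ^ i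
    else 0 with hF
  set g : ℕ → ℝ := fun i => if 2 ≤ i then c ^ i / (2 * i) else 0 with hg
  -- the limiting sum
  have hlog : HasSum (fun k : ℕ => c ^ (k + 1) / (k + 1)) (-Real.log (1 - c)) :=
    Real.hasSum_pow_div_log_of_abs_lt_one (by rwa [abs_of_pos hc0])
  have hshift : HasSum (fun k : ℕ => c ^ (k + 2) / ((k : ℝ) + 2))
      (-Real.log (1 - c) - c) := by
    have h := (hasSum_nat_add_iff' (f := fun k : ℕ => c ^ (k + 1) / ((k : ℝ) + 1)) 1).mpr hlog
    simp only [Finset.range_one, Finset.sum_singleton] at h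
    have hfun : (fun k : ℕ => c ^ (k + 2) / ((k : ℝ) + 2))
        = fun k : ℕ => c ^ (k + 1 + 1) / ((↑(k + 1) : ℝ) + 1) := by
      funext k
      have : k + 2 = k + 1 + 1 := by omega
      rw [this]
      push_cast
      ring_nf
    rw [hfun]
    convert h using 1
    · rfl
    norm_num
  have hgsum : HasSum g (-(1 / 2) * (Real.log (1 - c) + c)) := by
    have h2 : HasSum (fun k : ℕ => g (k + 2)) (-(1 / 2) * (Real.log (1 - c) + c)) := by
      have h := hshift.mul_left (1 / 2)
      have hfun : (fun k : ℕ => g (k + 2))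
          = fun k : ℕ => 1 / 2 * (c ^ (k + 2) / ((k : ℝ) + 2)) := by
        funext k
        simp only [hg]
        rw [if_pos (by omega : 2 ≤ k + 2)]
        have hk : ((k : ℝ) + 2) ≠ 0 := by positivity
        push_cast
        field_simp
      rw [hfun]
      convert h using 1
      · rfl
      ring
    refine (hasSum_nat_add_iff' (f := g) (g := -(1 / 2) * (Real.log (1 - c) + c)) 2).mp ?_
    convert h2 using 1
    · rfl
    have hz : ∑ i ∈ Finset.range 2, g i = 0 := by
      simp [hg, Finset.sum_range_succ]
    rw [hz, sub_zero]
  -- termwise limits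
  have hab : ∀ i : ℕ, Tendsto (fun n => F n i) atTop (nhds (g i)) := by
    intro i
    by_cases h2 : 2 ≤ i
    · have key : ∀ᶠ n : ℕ in atTop, F n i
          = ((n.descFactorial i : ℝ) / (n : ℝ) ^ i) * (c ^ i / (2 * i)) := by
        filter_upwards [eventually_ge_atTop i] with n hn
        have hn0 : 0 < n := by omega
        simp only [hF]
        rw [if_pos (show 2 ≤ i ∧ i ≤ n from ⟨h2, hn⟩)]
        exact term_eq c h2 hn0
      have hlim : Tendsto (fun n : ℕ => ((n.descFactorial i : ℝ) / (n : ℝ) ^ i)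
          * (c ^ i / (2 * i))) atTop (nhds (1 * (c ^ i / (2 * i)))) :=
        (desc_div_tendsto i).mul_const _
      rw [one_mul] at hlim
      simp only [hg]
      rw [if_pos h2]
      exact hlim.congr' (key.mono fun n h => h.symm)
    · have hz : (fun n => F n i) = fun _ => 0 := by
        funext n
        simp only [hF]
        exact if_neg (fun hh => h2 hh.1)
      rw [hz, hg]
      simp only [if_neg h2]
      exact tendsto_const_nhds
  -- bound
  have h_bound : ∀ᶠ n : ℕ in atTop, ∀ i, ‖F n i‖ ≤ c ^ i := by
    filter_upwards [eventually_ge_atTop 1] with n hn i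
    by_cases h : 2 ≤ i ∧ i ≤ n
    · simp only [hF]
      rw [if_pos h, term_eq c h.1 (by omega)]
      have hd0 : (0:ℝ) ≤ (n.descFactorial i : ℝ) / (n : ℝ) ^ i := by positivity
      have hd1 : ((n.descFactorial i : ℝ) / (n : ℝ) ^ i) ≤ 1 := desc_div_le
      have hci : c ^ i / (2 * i) ≤ c ^ i := by
        have hi1 : (1:ℝ) ≤ 2 * i := by
          have : (2:ℝ) ≤ (i:ℝ) := by exact_mod_cast h.1
          nlinarith
        rw [div_le_iff₀ (by linarith)]
        nlinarith [pow_nonneg hc0' i]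
      have hnn : (0:ℝ) ≤ c ^ i / (2 * i) := by positivity
      rw [Real.norm_eq_abs, abs_of_nonneg (by positivity)]
      calc ((n.descFactorial i : ℝ) / (n : ℝ) ^ i) * (c ^ i / (2 * i))
          ≤ 1 * (c ^ i / (2 * i)) := by nlinarith
        _ = c ^ i / (2 * i) := one_mul _
        _ ≤ c ^ i := hci
    · simp only [hF]
      rw [if_neg h, norm_zero]
      positivity
  have h_sum : Summable (fun i : ℕ => c ^ i) :=
    summable_geometric_of_lt_one hc0' hc1
  have main := tendsto_tsum_of_dominated_convergence h_sum hab h_bound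
  rw [hgsum.tsum_eq] at main
  refine main.congr (fun n => ?_)
  rw [tsum_eq_sum (s := Finset.Icc 2 n) (fun i hi => ?_)]
  · refine Finset.sum_congr rfl fun i hi => ?_
    simp only [hF]
    rw [if_pos (Finset.mem_Icc.mp hi)]
  · simp only [hF]
    rw [if_neg (fun hh => hi (Finset.mem_Icc.mpr hh))]
end

section
/- Suppose F is a satisfiable 2-CNF formula on n variables and u, v are two satisfying assignments. Let S be the set of variables on which u and v differ. Then u and v are connected by a path of single-variable flips through satisfying assignments if and only if S contains no splitting pair of the implication digraph D_F. -/
/-- A literal on `n` boolean variables: a variable together with a sign. -/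
abbrev Lit (n : ℕ) := Fin n × Bool

/-- Negation of a literal. -/
def Lit.negate {n : ℕ} (x : Lit n) : Lit n := (x.1, !x.2)

/-- The assignment `a` sets the literal `x` true. -/
def SetsTrue {n : ℕ} (a : Fin n → Bool) (x : Lit n) : Prop := a x.1 = x.2

/-- A 2-CNF formula given as a finite set of incompatibilities `(x, y)`
(each representing the clause `¬x ∨ ¬y`): `a` satisfies the formula iff no
incompatible pair of literals is simultaneously set true. -/
def Satisfies {n : ℕ} (F : Finset (Lit n × Lit n)) (a : Fin n → Bool) : Prop :=
  ∀ q ∈ F, ¬(SetsTrue a q.1 ∧ SetsTrue a q.2)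

/-- Each incompatibility involves literals on two distinct variables. -/
def ProperPairs {n : ℕ} (F : Finset (Lit n × Lit n)) : Prop :=
  ∀ q ∈ F, q.1.1 ≠ q.2.1

/-- Edges of the implication digraph `D_F`: each incompatibility `(x, y)`
contributes the edges `x → ¬y` and `y → ¬x`. -/
def Edge {n : ℕ} (F : Finset (Lit n × Lit n)) (x y : Lit n) : Prop :=
  (x, Lit.negate y) ∈ F ∨ (Lit.negate y, x) ∈ F

/-- Reachability `x ⇝ y` in the implication digraph (directed paths, possibly empty). -/
def Reach {n : ℕ} (F : Finset (Lit n × Lit n)) : Lit n → Lit n → Prop :=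
  Relation.ReflTransGen (Edge F)

/-- The strong component of the literal `x` in `D_F`. -/
def StrongComp {n : ℕ} (F : Finset (Lit n × Lit n)) (x : Lit n) : Set (Lit n) :=
  {y | Reach F x y ∧ Reach F y x}

/-- The literal `x` lies in a splitting pair: its strong component is nontrivial and
the components `C(x)` and `C(¬x)` are incomparable in the reachability order. -/
def SplittingPairAt {n : ℕ} (F : Finset (Lit n × Lit n)) (x : Lit n) : Prop :=
  (∃ y, y ≠ x ∧ y ∈ StrongComp F x) ∧
    ¬Reach F x (Lit.negate x) ∧ ¬Reach F (Lit.negate x) x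

/-- The graph on satisfying assignments of `F`: vertices are satisfying assignments,
edges join assignments differing at exactly one variable (single-variable flips). -/
def SatGraph {n : ℕ} (F : Finset (Lit n × Lit n)) :
    SimpleGraph {a : Fin n → Bool // Satisfies F a} where
  Adj a b := ∃ i, a.1 i ≠ b.1 i ∧ ∀ j, j ≠ i → a.1 j = b.1 j
  symm := by
    constructor
    rintro a b ⟨i, h1, h2⟩
    exact ⟨i, fun h => h1 h.symm, fun j hj => (h2 j hj).symm⟩
  loopless := by
    constructor
    rintro a ⟨i, h1, _⟩
    exact h1 rfl


section AuxLemmas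

variable {n : ℕ} {F : Finset (Lit n × Lit n)}

lemma Lit.negate_negate (x : Lit n) : x.negate.negate = x := by
  simp [Lit.negate]

lemma bool_ne_iff {a b : Bool} : a ≠ b ↔ a = !b := by
  cases a <;> cases b <;> simp

lemma edge_imp {a : Fin n → Bool} (ha : Satisfies F a) {x y : Lit n}
    (h : Edge F x y) (hx : SetsTrue a x) : SetsTrue a y := by
  have hy : ¬ SetsTrue a y.negate → SetsTrue a y := by
    simp only [SetsTrue, Lit.negate]
    cases hb : a y.1 <;> cases y.2 <;> simp
  rcases h with h | h
  · exact hy fun hc => ha _ h ⟨hx, hc⟩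
  · exact hy fun hc => ha _ h ⟨hc, hx⟩

lemma reach_imp {a : Fin n → Bool} (ha : Satisfies F a) {x y : Lit n}
    (h : Reach F x y) (hx : SetsTrue a x) : SetsTrue a y := by
  induction h with
  | refl => exact hx
  | tail _ e ih => exact edge_imp ha e ih

lemma edge_flip {x y : Lit n} (h : Edge F x y) : Edge F y.negate x.negate := by
  unfold Edge at h ⊢
  rw [Lit.negate_negate]
  exact h.symm

lemma reach_flip {x y : Lit n} (h : Reach F x y) : Reach F y.negate x.negate := by
  induction h with
  | refl => exact Relation.ReflTransGen.refl
  | tail _ e ih => exact Relation.ReflTransGen.head (edge_flip e) ih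

lemma key_reach (hF : ProperPairs F) :
    ∀ k (u v : Fin n → Bool) (hu : Satisfies F u) (hv : Satisfies F v),
      (Finset.univ.filter (fun i => u i ≠ v i)).card = k →
      (¬∃ x : Lit n, SplittingPairAt F x ∧ ∀ y ∈ StrongComp F x, u y.1 ≠ v y.1) →
      (SatGraph F).Reachable ⟨u, hu⟩ ⟨v, hv⟩ := by
  intro k
  induction k using Nat.strong_induction_on with
  | _ k IH =>
  intro u v hu hv hcard hns
  by_cases h0 : ∀ i, u i = v i
  · have he : (⟨u, hu⟩ : {a // Satisfies F a}) = ⟨v, hv⟩ := Subtype.ext (funext h0)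
    rw [he]
  · push_neg at h0
    obtain ⟨i₀, hi₀⟩ := h0
    set T : Lit n → Prop := fun z => u z.1 = z.2 ∧ v z.1 ≠ z.2 with hT
    have hz₀ : T (i₀, u i₀) := ⟨rfl, fun h => hi₀ h.symm⟩
    have hvT : ∀ z, T z → SetsTrue v z.negate := fun z hz => bool_ne_iff.mp hz.2
    have hflip : ∃ z, T z ∧ ∀ t, T t → t.1 ≠ z.1 → ¬ Edge F t z := by
      by_contra hc
      push_neg at hc
      choose g hg1 hg2 hg3 using hc
      let f : ℕ → {z : Lit n // T z} :=
        fun m => Nat.rec ⟨_, hz₀⟩ (fun _ p => ⟨g p.1 p.2, hg1 p.1 p.2⟩) m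
      have hfE : ∀ m, Edge F (f (m+1)).1 (f m).1 := fun m => hg3 _ _
      have hfne : ∀ m, (f (m+1)).1.1 ≠ (f m).1.1 := fun m => hg2 _ _
      have hreach : ∀ a b, a ≤ b → Reach F (f b).1 (f a).1 := by
        intro a b hab
        induction b, hab using Nat.le_induction with
        | base => exact Relation.ReflTransGen.refl
        | succ b hab ih => exact Relation.ReflTransGen.head (hfE b) ih
      have hex : ∃ i j, i < j ∧ f i = f j := by
        obtain ⟨i, j, hij, hfij⟩ := Finite.exists_ne_map_eq_of_infinite f
        rcases hij.lt_or_gt with h | h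
        · exact ⟨i, j, h, hfij⟩
        · exact ⟨j, i, h, hfij.symm⟩
      obtain ⟨i, j, hlt, hfij⟩ := hex
      set x := (f i).1 with hxdef
      set y := (f (i+1)).1 with hydef
      have hxy : Reach F x y := by
        have h' := hreach (i+1) j hlt
        rwa [← hfij] at h'
      have hyx : Reach F y x := Relation.ReflTransGen.single (hfE i)
      have hTx : T x := (f i).2
      have hRx : ¬ Reach F x x.negate := by
        intro h
        have h2 : SetsTrue u x.negate := reach_imp hu h hTx.1
        simp only [SetsTrue, Lit.negate] at h2
        rw [hTx.1] at h2
        simp at h2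
      have hRnx : ¬ Reach F x.negate x := by
        intro h
        exact hTx.2 (reach_imp hv h (hvT _ hTx))
      apply hns
      refine ⟨x, ⟨⟨y, fun h => hfne i (congrArg Prod.fst h), hxy, hyx⟩, hRx, hRnx⟩,
        fun w hw => ?_⟩
      obtain ⟨hxw, hwx⟩ := hw
      have h1 : u w.1 = w.2 := reach_imp hu hxw hTx.1
      have h2 : SetsTrue v w.negate := reach_imp hv (reach_flip hwx) (hvT _ hTx)
      simp only [SetsTrue, Lit.negate] at h2
      rw [h1, h2]
      simp
    obtain ⟨z, hz, hzflip⟩ := hflip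
    set u' : Fin n → Bool := Function.update u z.1 (!z.2) with hu'def
    have huz : u' z.1 = !z.2 := Function.update_self _ _ _
    have hup : ∀ j, j ≠ z.1 → u' j = u j := fun j hj => Function.update_of_ne hj _ _
    have hvz : v z.1 = !z.2 := bool_ne_iff.mp hz.2
    have hu' : Satisfies F u' := by
      rintro q hq ⟨h1, h2⟩
      have hne := hF q hq
      by_cases c1 : q.1.1 = z.1
      · have c2 : q.2.1 ≠ z.1 := by rw [← c1]; exact fun h => hne h.symm
        have hq12 : q.1.2 = !z.2 := by
          have h1' : u' q.1.1 = q.1.2 := h1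
          rw [c1, huz] at h1'
          exact h1'.symm
        have hq1 : q.1 = z.negate := Prod.ext c1 hq12
        have ht1 : u q.2.1 = q.2.2 := by rw [← hup q.2.1 c2]; exact h2
        have ht2 : v q.2.1 ≠ q.2.2 := by
          intro hvq2
          apply hv q hq
          refine ⟨?_, hvq2⟩
          show v q.1.1 = q.1.2
          rw [c1, hq12, hvz]
        have hedge : Edge F q.2 z := Or.inr (by rw [← hq1]; exact hq)
        exact hzflip q.2 ⟨ht1, ht2⟩ c2 hedge
      · by_cases c2 : q.2.1 = z.1
        · have hq22 : q.2.2 = !z.2 := by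
            have h2' : u' q.2.1 = q.2.2 := h2
            rw [c2, huz] at h2'
            exact h2'.symm
          have hq2 : q.2 = z.negate := Prod.ext c2 hq22
          have ht1 : u q.1.1 = q.1.2 := by rw [← hup q.1.1 c1]; exact h1
          have ht2 : v q.1.1 ≠ q.1.2 := by
            intro hvq1
            apply hv q hq
            refine ⟨hvq1, ?_⟩
            show v q.2.1 = q.2.2
            rw [c2, hq22, hvz]
          have hedge : Edge F q.1 z := Or.inl (by rw [← hq2]; exact hq)
          exact hzflip q.1 ⟨ht1, ht2⟩ c1 hedge
        · apply hu q hq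
          refine ⟨?_, ?_⟩
          · show u q.1.1 = q.1.2
            rw [← hup q.1.1 c1]; exact h1
          · show u q.2.1 = q.2.2
            rw [← hup q.2.1 c2]; exact h2
    have hadj : (SatGraph F).Adj ⟨u, hu⟩ ⟨u', hu'⟩ := by
      refine ⟨z.1, ?_, fun j hj => (hup j hj).symm⟩
      show u z.1 ≠ u' z.1
      rw [huz, hz.1]
      simp
    have hsub : (Finset.univ.filter (fun i => u' i ≠ v i)) ⊆
        (Finset.univ.filter (fun i => u i ≠ v i)).erase z.1 := by
      intro j hj
      simp only [Finset.mem_filter, Finset.mem_univ, true_and] at hj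
      have hjz : j ≠ z.1 := by
        intro h
        apply hj
        rw [h, huz, hvz]
      refine Finset.mem_erase.mpr ⟨hjz, ?_⟩
      simp only [Finset.mem_filter, Finset.mem_univ, true_and]
      rw [← hup j hjz]
      exact hj
    have hmem : z.1 ∈ (Finset.univ.filter (fun i => u i ≠ v i)) := by
      simp only [Finset.mem_filter, Finset.mem_univ, true_and]
      rw [hz.1]
      exact fun h => hz.2 h.symm
    have hlt : (Finset.univ.filter (fun i => u' i ≠ v i)).card < k := by
      calc (Finset.univ.filter (fun i => u' i ≠ v i)).card
          ≤ ((Finset.univ.filter (fun i => u i ≠ v i)).erase z.1).card :=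
            Finset.card_le_card hsub
        _ < (Finset.univ.filter (fun i => u i ≠ v i)).card :=
            Finset.card_erase_lt_of_mem hmem
        _ = k := hcard
    have hns' : ¬∃ x : Lit n, SplittingPairAt F x ∧
        ∀ y ∈ StrongComp F x, u' y.1 ≠ v y.1 := by
      rintro ⟨x, hsp, hd⟩
      apply hns
      refine ⟨x, hsp, fun w hw => ?_⟩
      have hwz : w.1 ≠ z.1 := by
        intro h
        exact hd w hw (by rw [h, huz, hvz])
      rw [← hup w.1 hwz]
      exact hd w hw
    exact hadj.reachable.trans (IH _ hlt u' v hu' hv rfl hns')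

end AuxLemmas

/-- **Lemma 1 (connectivity).** For a satisfiable 2-CNF formula `F` and satisfying
assignments `u`, `v`, with `S` the set of variables where `u` and `v` differ:
`u` and `v` are connected by single-variable flips through satisfying assignments
iff `S` contains no splitting pair of `D_F` (i.e. there is no splitting pair all of
whose literals lie on variables where `u` and `v` differ). -/
theorem connected_iff_no_splitting_pair {n : ℕ} (F : Finset (Lit n × Lit n))
    (hF : ProperPairs F) (u v : Fin n → Bool)
    (hu : Satisfies F u) (hv : Satisfies F v) :
    (SatGraph F).Reachable ⟨u, hu⟩ ⟨v, hv⟩ ↔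
      ¬∃ x : Lit n, SplittingPairAt F x ∧ ∀ y ∈ StrongComp F x, u y.1 ≠ v y.1 := by
  constructor
  · rintro h ⟨x, ⟨⟨y, hyne, hxy, hyx⟩, hRx, hRnx⟩, hdiff⟩
    have hyvar : y.1 ≠ x.1 := by
      intro hv1
      have hy2 : y.2 = x.2 ∨ y.2 = !x.2 := by cases y.2 <;> cases x.2 <;> simp
      rcases hy2 with h2 | h2
      · exact hyne (Prod.ext hv1 h2)
      · have hyx' : y = x.negate := Prod.ext hv1 h2
        rw [hyx'] at hxy
        exact hRx hxy
    have step : ∀ a b : {a // Satisfies F a}, (SatGraph F).Adj a b →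
        SetsTrue a.1 x → SetsTrue b.1 x := by
      rintro a b ⟨i, hi, hj⟩ hax
      by_cases hxi : x.1 = i
      · have hay : SetsTrue a.1 y := reach_imp a.2 hxy hax
        have hby : SetsTrue b.1 y := by
          rw [SetsTrue, ← hj y.1 (hxi ▸ hyvar)]
          exact hay
        exact reach_imp b.2 hyx hby
      · rw [SetsTrue, ← hj x.1 hxi]
        exact hax
    have inv : SetsTrue u x ↔ SetsTrue v x := by
      obtain ⟨p⟩ := h
      have walkinv : ∀ (a b : {a // Satisfies F a}), (SatGraph F).Walk a b →
          (SetsTrue a.1 x ↔ SetsTrue b.1 x) := by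
        intro a b p
        induction p with
        | nil => exact Iff.rfl
        | cons hadj p ih => exact Iff.trans ⟨step _ _ hadj, step _ _ hadj.symm⟩ ih
      exact walkinv _ _ p
    have hd := hdiff x ⟨Relation.ReflTransGen.refl, Relation.ReflTransGen.refl⟩
    rw [SetsTrue, SetsTrue] at inv
    cases hx2 : x.2 <;> cases hc : u x.1 <;> cases hc2 : v x.1 <;> simp_all
  · intro hns
    exact key_reach hF _ u v hu hv rfl hns
end

section
/- Let F be a satisfiable 2-CNF formula and (C, C̄) a splitting pair of its implication digraph D_F. Then for each member of the pair there exists a satisfying assignment of F that sets all literals of that member true. In particular, both 'strategies' C and C̄ are realized by satisfying assignments. -/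
lemma negate_negate {n : ℕ} (y : Lit n) : Lit.negate (Lit.negate y) = y := by
  simp [Lit.negate]

lemma edge_flip_s9 {n : ℕ} {F : Finset (Lit n × Lit n)} {u v : Lit n}
    (h : Edge F u v) : Edge F (Lit.negate v) (Lit.negate u) := by
  rcases h with h | h
  · exact Or.inr (by rwa [negate_negate])
  · exact Or.inl (by rwa [negate_negate])

lemma reach_flip_s9 {n : ℕ} {F : Finset (Lit n × Lit n)} {u v : Lit n}
    (h : Reach F u v) : Reach F (Lit.negate v) (Lit.negate u) := by
  induction h with
  | refl => exact Relation.ReflTransGen.refl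
  | tail _ e ih => exact Relation.ReflTransGen.head (edge_flip_s9 e) ih

lemma realize_one {n : ℕ} (F : Finset (Lit n × Lit n))
    (hsat : ∃ a, Satisfies F a) (x : Lit n) (hx : ¬Reach F x (Lit.negate x)) :
    ∃ a, Satisfies F a ∧ ∀ y, Reach F x y → SetsTrue a y := by
  classical
  obtain ⟨a, ha⟩ := hsat
  set a' : Fin n → Bool := fun i =>
    if Reach F x (i, true) then true
    else if Reach F x (i, false) then false else a i with ha'
  have hcons : ∀ y, Reach F x y → ¬Reach F x (Lit.negate y) := by
    intro y h1 h2
    exact hx (h2.trans (reach_flip_s9 h1))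
  have hforce : ∀ y, Reach F x y → SetsTrue a' y := by
    rintro ⟨i, b⟩ h
    cases b with
    | true => simp only [SetsTrue, ha', if_pos h]
    | false =>
      have h1 : ¬Reach F x (i, true) := hcons (i, false) h
      simp only [SetsTrue, ha', if_neg h1, if_pos h]
  have hclass : ∀ y, SetsTrue a' y → Reach F x y ∨ SetsTrue a y := by
    rintro ⟨i, b⟩ h
    simp only [SetsTrue, ha'] at h
    by_cases h1 : Reach F x (i, true)
    · rw [if_pos h1] at h; subst h; exact Or.inl h1
    · rw [if_neg h1] at h
      by_cases h2 : Reach F x (i, false)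
      · rw [if_pos h2] at h; subst h; exact Or.inl h2
      · rw [if_neg h2] at h; exact Or.inr h
  refine ⟨a', ?_, hforce⟩
  rintro ⟨p, q⟩ hq ⟨hp', hq'⟩
  have e1 : Edge F p (Lit.negate q) := Or.inl (by rwa [negate_negate])
  have e2 : Edge F q (Lit.negate p) := Or.inr (by rwa [negate_negate])
  rcases hclass p hp' with h | h
  · have := hforce _ (h.tail e1)
    have hne : a' q.1 = !q.2 := this
    rw [hq'] at hne
    simp at hne
  · rcases hclass q hq' with h2 | h2
    · have := hforce _ (h2.tail e2)
      have hne : a' p.1 = !p.2 := this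
      rw [hp'] at hne
      simp at hne
    · exact ha (p, q) hq ⟨h, h2⟩

/-- For a satisfiable `F` and a splitting pair `(C(x), C(¬x))`, each member of the
pair is realized: there is a satisfying assignment setting all literals of `C(x)`
true, and one setting all literals of `C(¬x)` true. -/
theorem splitting_pair_both_realized {n : ℕ} (F : Finset (Lit n × Lit n))
    (hF : ProperPairs F) (hsat : ∃ a, Satisfies F a)
    (x : Lit n) (hx : SplittingPairAt F x) :
    (∃ a, Satisfies F a ∧ ∀ y ∈ StrongComp F x, SetsTrue a y) ∧
    (∃ a, Satisfies F a ∧ ∀ y ∈ StrongComp F (Lit.negate x), SetsTrue a y) := by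
  obtain ⟨-, h1, h2⟩ := hx
  constructor
  · obtain ⟨a, ha, hf⟩ := realize_one F hsat x h1
    exact ⟨a, ha, fun y hy => hf y hy.1⟩
  · have h1' : ¬Reach F (Lit.negate x) (Lit.negate (Lit.negate x)) := by
      rwa [negate_negate]
    obtain ⟨a, ha, hf⟩ := realize_one F hsat (Lit.negate x) h1'
    exact ⟨a, ha, fun y hy => hf y hy.1⟩
end
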